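/- Perron–Frobenius under discrete Doeblin minorization (simplicity and peripheral uniqueness): Let n be a nonempty finite index type and A an n×n real matrix with nonnegative entries. Suppose there exist α > 0 and vectors u, g : n → ℝ with u i > 0 and g j > 0 for all i, j, such that A i j ≥ α · u i · g j for all i, j. Then there exist r > 0 and w : n → ℝ with w i > 0 for all i and A *ᵥ w = r • w such that: (1) the eigenspace of A at r is one-dimensional, i.e. every v : n → ℂ with Aℂ *ᵥ v = r • v is a complex scalar multiple of the complexification of w; and (2) r is the only eigenvalue of A of modulus r: every μ in the spectrum of Aℂ with ‖μ‖ = r satisfies μ = r, and all other eigenvalues have modulus strictly bounded by r in the sense ‖μ‖ ≤ r. -/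

import Mathlib

/-!
A Doeblin minorization makes every entry of `A` positive. For a positive matrix the
Collatz–Wielandt function `x ↦ minᵢ (A x)ᵢ / xᵢ` attains its maximum `r` at a positive vector
`w`, and `A w = r w` because otherwise applying `A` once more would increase it. Comparing an
arbitrary vector with the smallest multiple of `w` dominating it gives both simplicity of `r` and
the bound `‖μ‖ ≤ r` (via `‖μ‖ |v| ≤ A |v|`). For `‖μ‖ = r`, the same bound applied to the
nonnegative matrix `A - δ • 1`, `0 < δ ≤ minᵢ A i i`, gives `‖μ - δ‖ ≤ ‖μ‖ - δ`, so `μ` lies on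
the positive real axis.
-/

open scoped Matrix
open Finset

theorem Complex.eq_norm_of_norm_sub_le {μ : ℂ} {δ : ℝ} (hδ : 0 < δ)
    (h : ‖μ - δ‖ ≤ ‖μ‖ - δ) : μ = ‖μ‖ := by
  have hsq : ‖μ - δ‖ ^ 2 = ‖μ‖ ^ 2 - 2 * δ * μ.re + δ ^ 2 := by
    simp only [Complex.sq_norm, Complex.normSq_apply, Complex.sub_re, Complex.sub_im,
      Complex.ofReal_re, Complex.ofReal_im]
    ring
  have hre : μ.re = ‖μ‖ := le_antisymm (Complex.re_le_norm μ) (by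
    nlinarith [norm_nonneg (μ - δ), pow_le_pow_left₀ (norm_nonneg _) h 2])
  rw [← hre]
  exact Complex.eq_re_of_ofReal_le (r := 0) (by simpa using Complex.re_eq_norm.1 hre)

namespace Matrix

variable {n : Type*} [Fintype n]

theorem mulVec_apply_pos {A : Matrix n n ℝ} (hA : ∀ i j, 0 < A i j) {x : n → ℝ} (hx : 0 < x)
    (i : n) : 0 < (A *ᵥ x) i := by
  obtain ⟨hx₀, j, hj⟩ := Pi.lt_def.1 hx
  exact sum_pos' (fun k _ => mul_nonneg (hA i k).le (hx₀ k)) ⟨j, mem_univ j, mul_pos (hA i j) hj⟩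

theorem mulVec_apply_le_mulVec_apply {A : Matrix n n ℝ} (hA : ∀ i j, 0 ≤ A i j) {x y : n → ℝ}
    (hxy : x ≤ y) (i : n) : (A *ᵥ x) i ≤ (A *ᵥ y) i :=
  sum_le_sum fun j _ => mul_le_mul_of_nonneg_left (hxy j) (hA i j)

theorem map_ofReal_mulVec_apply_re (A : Matrix n n ℝ) (v : n → ℂ) (i : n) :
    ((A.map (↑) *ᵥ v) i).re = (A *ᵥ fun j => (v j).re) i := by
  simp [mulVec, dotProduct, Complex.re_sum]

theorem map_ofReal_mulVec_apply_im (A : Matrix n n ℝ) (v : n → ℂ) (i : n) :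
    ((A.map (↑) *ᵥ v) i).im = (A *ᵥ fun j => (v j).im) i := by
  simp [mulVec, dotProduct, Complex.im_sum]

theorem norm_smul_le_mulVec_norm {B : Matrix n n ℝ} (hB : ∀ i j, 0 ≤ B i j) {μ : ℂ}
    {v : n → ℂ} (hv : B.map (↑) *ᵥ v = μ • v) :
    ‖μ‖ • (fun i => ‖v i‖) ≤ B *ᵥ fun i => ‖v i‖ := fun i =>
  calc ‖μ‖ * ‖v i‖ = ‖∑ j, (B i j : ℂ) * v j‖ := by
        rw [← norm_mul, ← smul_eq_mul, ← Pi.smul_apply, ← hv]; rfl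
    _ ≤ ∑ j, ‖(B i j : ℂ) * v j‖ := norm_sum_le _ _
    _ = (B *ᵥ fun i => ‖v i‖) i := by simp [mulVec, dotProduct, abs_of_nonneg (hB i _)]

theorem exists_mulVec_eq_smul_of_mem_spectrum [DecidableEq n] {K : Type*} [Field K]
    {M : Matrix n n K} {μ : K} (hμ : μ ∈ spectrum K M) : ∃ v ≠ 0, M *ᵥ v = μ • v := by
  rw [← spectrum_toLin', ← Module.End.hasEigenvalue_iff_mem_spectrum] at hμ
  obtain ⟨v, hv⟩ := hμ.exists_hasEigenvector
  exact ⟨v, hv.2, by simpa using hv.apply_eq_smul⟩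

variable [Nonempty n]

theorem exists_le_smul_apply_eq {w : n → ℝ} (hw : ∀ i, 0 < w i) (x : n → ℝ) :
    ∃ c i₀, x ≤ c • w ∧ x i₀ = c * w i₀ := by
  obtain ⟨i₀, -, hi₀⟩ := exists_max_image univ (fun i => x i / w i) univ_nonempty
  exact ⟨x i₀ / w i₀, i₀, fun i => (div_le_iff₀ (hw i)).1 (hi₀ i (mem_univ i)),
    (div_mul_cancel₀ _ (hw i₀).ne').symm⟩

theorem exists_eq_smul_of_mulVec_eq_smul {A : Matrix n n ℝ} (hA : ∀ i j, 0 < A i j) {r : ℝ}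
    {w x : n → ℝ} (hw : ∀ i, 0 < w i) (hAw : A *ᵥ w = r • w) (hAx : A *ᵥ x = r • x) :
    ∃ c : ℝ, x = c • w := by
  obtain ⟨c, i₀, hle, heq⟩ := exists_le_smul_apply_eq hw x
  refine ⟨c, (sub_eq_zero.1 ?_).symm⟩
  by_contra hne
  have hAz : A *ᵥ (c • w - x) = r • (c • w - x) := by
    rw [mulVec_sub, mulVec_smul, hAw, hAx, smul_sub, smul_comm]
  have := mulVec_apply_pos hA ((sub_nonneg.2 hle).lt_of_ne' hne) i₀
  simp [hAz, heq] at this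

theorem le_of_smul_le_mulVec {B : Matrix n n ℝ} (hB : ∀ i j, 0 ≤ B i j) {ρ s : ℝ}
    {w x : n → ℝ} (hw : ∀ i, 0 < w i) (hBw : B *ᵥ w = ρ • w) (hx : 0 < x)
    (h : s • x ≤ B *ᵥ x) : s ≤ ρ := by
  obtain ⟨c, i₀, hle, heq⟩ := exists_le_smul_apply_eq hw x
  obtain ⟨-, j, hj⟩ := Pi.lt_def.1 hx
  have hc : 0 < c := pos_of_mul_pos_left (hj.trans_le (hle j)) (hw j).le
  have hxi₀ : 0 < x i₀ := heq ▸ mul_pos hc (hw i₀)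
  refine le_of_mul_le_mul_right ?_ hxi₀
  calc s * x i₀ ≤ (B *ᵥ x) i₀ := h i₀
    _ ≤ (B *ᵥ (c • w)) i₀ := mulVec_apply_le_mulVec_apply hB hle i₀
    _ = ρ * x i₀ := by
        rw [mulVec_smul, hBw, heq, smul_smul, Pi.smul_apply, smul_eq_mul, mul_comm c]; ring

theorem norm_le_of_map_ofReal_mulVec_eq_smul {B : Matrix n n ℝ} (hB : ∀ i j, 0 ≤ B i j)
    {ρ : ℝ} {w : n → ℝ} (hw : ∀ i, 0 < w i) (hBw : B *ᵥ w = ρ • w) {μ : ℂ} {v : n → ℂ}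
    (hv₀ : v ≠ 0) (hv : B.map (↑) *ᵥ v = μ • v) : ‖μ‖ ≤ ρ := by
  obtain ⟨j, hj⟩ := Function.ne_iff.1 hv₀
  exact le_of_smul_le_mulVec hB hw hBw
    (Pi.lt_def.2 ⟨fun i => norm_nonneg _, j, norm_pos_iff.2 hj⟩) (norm_smul_le_mulVec_norm hB hv)

noncomputable def collatzWielandt (A : Matrix n n ℝ) (x : n → ℝ) : ℝ :=
  univ.inf' univ_nonempty fun i => (A *ᵥ x) i / x i

variable {A : Matrix n n ℝ}

theorem lt_collatzWielandt_iff {x : n → ℝ} (hx : ∀ i, 0 < x i) {t : ℝ} :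
    t < A.collatzWielandt x ↔ ∀ i, t * x i < (A *ᵥ x) i := by
  simp only [collatzWielandt, lt_inf'_iff, mem_univ, true_implies, lt_div_iff₀ (hx _)]

theorem collatzWielandt_smul_le_mulVec {x : n → ℝ} (hx : ∀ i, 0 < x i) :
    A.collatzWielandt x • x ≤ A *ᵥ x :=
  fun i => (le_div_iff₀ (hx i)).1 (inf'_le _ (mem_univ i))

theorem collatzWielandt_smul {x : n → ℝ} {c : ℝ} (hc : 0 < c) :
    A.collatzWielandt (c • x) = A.collatzWielandt x := by
  simp only [collatzWielandt, mulVec_smul, Pi.smul_apply, smul_eq_mul,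
    mul_div_mul_left _ _ hc.ne']

theorem collatzWielandt_lt_collatzWielandt_mulVec (hA : ∀ i j, 0 < A i j) {x : n → ℝ}
    (hx : ∀ i, 0 < x i) (hne : A *ᵥ x ≠ A.collatzWielandt x • x) :
    A.collatzWielandt x < A.collatzWielandt (A *ᵥ x) := by
  have hx' : 0 < x := Pi.lt_def.2 ⟨fun i => (hx i).le, Classical.arbitrary n, hx _⟩
  have hAz := mulVec_apply_pos hA
    ((sub_nonneg.2 (collatzWielandt_smul_le_mulVec hx)).lt_of_ne' (sub_ne_zero.2 hne))
  refine (lt_collatzWielandt_iff (mulVec_apply_pos hA hx')).2 fun i => ?_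
  simpa [mulVec_sub, mulVec_smul] using hAz i

theorem exists_pos_eigenvector_of_pos (hA : ∀ i j, 0 < A i j) :
    ∃ r : ℝ, 0 < r ∧ ∃ w : n → ℝ, (∀ i, 0 < w i) ∧ A *ᵥ w = r • w := by
  classical
  have hAx : ∀ x ∈ stdSimplex ℝ n, ∀ i, 0 < (A *ᵥ x) i := fun x hx =>
    mulVec_apply_pos hA (Pi.lt_def.2 ⟨hx.1, by
      by_contra! h
      simpa [le_antisymm (h _) (hx.1 _)] using hx.2⟩)
  have hcont : ContinuousOn (fun x => A.collatzWielandt (A *ᵥ x)) (stdSimplex ℝ n) :=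
    ContinuousOn.finset_inf'_apply univ_nonempty fun i _ =>
      ContinuousOn.div (by fun_prop) (by fun_prop) fun x hx => (hAx x hx i).ne'
  obtain ⟨x, hx, hmax⟩ := (isCompact_stdSimplex ℝ n).exists_isMaxOn
    ⟨_, single_mem_stdSimplex ℝ (Classical.arbitrary n)⟩ hcont
  set w := A *ᵥ x
  have hw : ∀ i, 0 < w i := hAx x hx
  have hw' : 0 < w := Pi.lt_def.2 ⟨fun i => (hw i).le, Classical.arbitrary n, hw _⟩
  refine ⟨A.collatzWielandt w, (lt_collatzWielandt_iff hw).2 fun i => by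
    simpa using mulVec_apply_pos hA hw' i, w, hw, ?_⟩
  by_contra hne
  have hs : 0 < ∑ i, w i := sum_pos (fun i _ => hw i) univ_nonempty
  have hmem : (∑ i, w i)⁻¹ • w ∈ stdSimplex ℝ n :=
    ⟨fun i => by simpa using (mul_pos (inv_pos.2 hs) (hw i)).le, by
      simp [← mul_sum, inv_mul_cancel₀ hs.ne']⟩
  have hle := isMaxOn_iff.1 hmax _ hmem
  rw [mulVec_smul, collatzWielandt_smul (inv_pos.2 hs)] at hle
  exact (collatzWielandt_lt_collatzWielandt_mulVec hA hw hne).not_ge hle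

theorem exists_eq_smul_of_map_ofReal_mulVec_eq_smul (hA : ∀ i j, 0 < A i j) {r : ℝ}
    {w : n → ℝ} (hw : ∀ i, 0 < w i) (hAw : A *ᵥ w = r • w) {v : n → ℂ}
    (hv : A.map (↑) *ᵥ v = (r : ℂ) • v) : ∃ c : ℂ, v = c • fun i => (w i : ℂ) := by
  obtain ⟨a, ha⟩ := exists_eq_smul_of_mulVec_eq_smul hA hw hAw (x := fun j => (v j).re)
    (funext fun i => by simp [← map_ofReal_mulVec_apply_re, hv])
  obtain ⟨b, hb⟩ := exists_eq_smul_of_mulVec_eq_smul hA hw hAw (x := fun j => (v j).im)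
    (funext fun i => by simp [← map_ofReal_mulVec_apply_im, hv])
  exact ⟨⟨a, b⟩, funext fun i => Complex.ext (by simpa using congrFun ha i)
    (by simpa using congrFun hb i)⟩

theorem eq_of_norm_eq_of_map_ofReal_mulVec_eq_smul (hA : ∀ i j, 0 < A i j) {r : ℝ}
    {w : n → ℝ} (hw : ∀ i, 0 < w i) (hAw : A *ᵥ w = r • w) {μ : ℂ} {v : n → ℂ}
    (hv₀ : v ≠ 0) (hv : A.map (↑) *ᵥ v = μ • v) (hμ : ‖μ‖ = r) : μ = r := by
  classical
  set δ := univ.inf' univ_nonempty fun i => A i i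
  have hδ : 0 < δ := (lt_inf'_iff _).2 fun i _ => hA i i
  have hB : ∀ i j, 0 ≤ (A - δ • 1) i j := fun i j => by
    rcases eq_or_ne i j with rfl | hij
    · simpa using inf'_le (fun i => A i i) (mem_univ i)
    · simpa [one_apply_ne hij] using (hA i j).le
  have hBw : (A - δ • 1) *ᵥ w = (r - δ) • w := by
    rw [sub_mulVec, smul_mulVec, one_mulVec, hAw, sub_smul]
  have hBv : (A - δ • 1).map (↑) *ᵥ v = (μ - δ) • v := by
    have hmap : (A - δ • 1).map ((↑) : ℝ → ℂ) = A.map (↑) - (δ : ℂ) • 1 := by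
      ext i j
      rcases eq_or_ne i j with rfl | hij <;> simp [one_apply_ne, *]
    rw [hmap, sub_mulVec, hv, smul_mulVec, one_mulVec, sub_smul]
  have hshift := norm_le_of_map_ofReal_mulVec_eq_smul hB hw hBw hv₀ hBv
  rw [← hμ] at hshift ⊢
  exact Complex.eq_norm_of_norm_sub_le hδ hshift

end Matrix

theorem perron_frobenius_doeblin_simplicity_general
    {n : Type*} [Fintype n] [DecidableEq n] [Nonempty n]
    (A : Matrix n n ℝ)
    (α : ℝ) (hα : 0 < α) (u g : n → ℝ)
    (hu : ∀ i, 0 < u i) (hg : ∀ j, 0 < g j)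
    (hmin : ∀ i j, α * u i * g j ≤ A i j) :
    ∃ r : ℝ, 0 < r ∧ ∃ w : n → ℝ, (∀ i, 0 < w i) ∧
      A *ᵥ w = r • w ∧
      (∀ v : n → ℂ, (A.map (Complex.ofReal ·)) *ᵥ v = (r : ℂ) • v →
        ∃ c : ℂ, v = c • fun i => (w i : ℂ)) ∧
      (∀ μ ∈ spectrum ℂ (A.map (Complex.ofReal ·)),
        ‖μ‖ ≤ r ∧ (‖μ‖ = r → μ = (r : ℂ))) := by
  have hpos : ∀ i j, 0 < A i j := fun i j =>
    (mul_pos (mul_pos hα (hu i)) (hg j)).trans_le (hmin i j)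
  obtain ⟨r, hr, w, hw, hAw⟩ := A.exists_pos_eigenvector_of_pos hpos
  refine ⟨r, hr, w, hw, hAw,
    fun v hv => A.exists_eq_smul_of_map_ofReal_mulVec_eq_smul hpos hw hAw hv, fun μ hμ => ?_⟩
  obtain ⟨v, hv₀, hv⟩ := Matrix.exists_mulVec_eq_smul_of_mem_spectrum hμ
  exact ⟨Matrix.norm_le_of_map_ofReal_mulVec_eq_smul (fun i j => (hpos i j).le) hw hAw hv₀ hv,
    A.eq_of_norm_eq_of_map_ofReal_mulVec_eq_smul hpos hw hAw hv₀ hv⟩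

/-- Perron–Frobenius under discrete Doeblin minorization (simplicity and
peripheral uniqueness): if `A` is nonnegative with `A i j ≥ α · u i · g j`
for some `α > 0` and strictly positive `u, g`, then there are `r > 0` and a
strictly positive `w` with `A *ᵥ w = r • w` such that (1) every complex
eigenvector of the complexified matrix at `r` is a scalar multiple of the
complexification of `w`, and (2) every eigenvalue `μ` satisfies `‖μ‖ ≤ r`,
and `‖μ‖ = r` forces `μ = r`. -/
theorem perron_frobenius_doeblin_simplicity
    {n : Type*} [Fintype n] [DecidableEq n] [Nonempty n]
    (A : Matrix n n ℝ) (hA : ∀ i j, 0 ≤ A i j)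
    (α : ℝ) (hα : 0 < α) (u g : n → ℝ)
    (hu : ∀ i, 0 < u i) (hg : ∀ j, 0 < g j)
    (hmin : ∀ i j, α * u i * g j ≤ A i j) :
    ∃ r : ℝ, 0 < r ∧ ∃ w : n → ℝ, (∀ i, 0 < w i) ∧
      A *ᵥ w = r • w ∧
      (∀ v : n → ℂ, (A.map (Complex.ofReal ·)) *ᵥ v = (r : ℂ) • v →
        ∃ c : ℂ, v = c • fun i => (w i : ℂ)) ∧
      (∀ μ ∈ spectrum ℂ (A.map (Complex.ofReal ·)),
        ‖μ‖ ≤ r ∧ (‖μ‖ = r → μ = (r : ℂ))) :=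
  perron_frobenius_doeblin_simplicity_general A α hα u g hu hg hmin
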